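/- Let X be a real Banach space, A : X →L[ℝ] X a continuous linear map, and u, χ ∈ X with A u = 0 and A χ = α • χ + β • u for real numbers α, β with α ≠ 0. Then for every τ ∈ ℝ, the operator exponential satisfies exp(−(τ • A)) χ = Real.exp (−τ * α) • χ + ((β / α) * (Real.exp (−τ * α) − 1)) • u. -/

import Mathlib

/-!
`χ + (β / α) • u` is an eigenvector of `A` for `α` and `u` one for `0`, and on an eigenvector
of `B` for `c` the exponential of `B` acts as multiplication by `exp c`. Subtracting the images gives
the formula.
-/

open NormedSpace ContinuousLinearMap

theorem ContinuousLinearMap.pow_apply_of_apply_eq_smul {𝕂 X : Type*} [CommSemiring 𝕂]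
    [AddCommMonoid X] [Module 𝕂 X] [TopologicalSpace X] {B : X →L[𝕂] X} {x : X} {c : 𝕂}
    (h : B x = c • x) (n : ℕ) : (B ^ n) x = c ^ n • x := by
  induction n with
  | zero => simp
  | succ n ih => rw [pow_succ', mul_apply_eq_comp, ih, map_smul, h, smul_smul, pow_succ]

theorem ContinuousLinearMap.exp_apply_of_apply_eq_smul {𝕂 X : Type*} [RCLike 𝕂]
    [NormedAddCommGroup X] [NormedSpace 𝕂 X] [CompleteSpace X] {B : X →L[𝕂] X} {x : X} {c : 𝕂}
    (h : B x = c • x) : exp B x = exp c • x := by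
  have hB := (exp_series_hasSum_exp' (𝕂 := 𝕂) B).mapL (apply 𝕂 X x)
  have hc := (exp_series_hasSum_exp' (𝕂 := 𝕂) c).smul_const x
  simp only [apply_apply, FunLike.coe_smul, Pi.smul_apply, pow_apply_of_apply_eq_smul h, smul_smul,
    smul_eq_mul] at hB hc
  exact hB.unique hc

/-- If `A u = 0` and `A χ = α • χ + β • u` with `α ≠ 0`, then
`exp(-τA) χ = e^{-τα} • χ + (β/α)(e^{-τα} - 1) • u`. -/
theorem stmt_10 {X : Type*} [NormedAddCommGroup X] [NormedSpace ℝ X] [CompleteSpace X]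
    (A : X →L[ℝ] X) (u χ : X) (α β : ℝ) (hα : α ≠ 0)
    (hu : A u = 0) (hχ : A χ = α • χ + β • u) (τ : ℝ) :
    (NormedSpace.exp (-(τ • A))) χ =
      Real.exp (-τ * α) • χ + ((β / α) * (Real.exp (-τ * α) - 1)) • u := by
  have hv : A (χ + (β / α) • u) = α • (χ + (β / α) • u) := by
    rw [map_add, map_smul, hu, hχ, smul_add, smul_smul, mul_div_cancel₀ β hα]
    module
  have hexp_v := exp_apply_of_apply_eq_smul
    (B := -(τ • A)) (x := χ + (β / α) • u) (c := -τ * α)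
    (by rw [neg_apply, smul_apply, hv, smul_smul, neg_mul, neg_smul])
  have hexp_u := exp_apply_of_apply_eq_smul
    (B := -(τ • A)) (x := u) (c := 0)
    (by rw [neg_apply, smul_apply, hu, smul_zero, neg_zero, zero_smul])
  rw [map_add, map_smul, hexp_u, exp_zero, one_smul, ← Real.exp_eq_exp_ℝ] at hexp_v
  rw [eq_sub_of_add_eq hexp_v]
  module
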